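/- arXiv:2511.13896 — 2 statements merged into one kernel-verified Lean document; each statement's English description precedes it below -/
import Mathlib

section
/- Let T>0, p∈(1,∞), α∈(1/p,1), m∈ℕ, u₀∈ℝ^m, and let G:[0,T]×ℝ^m→ℝ^m be a Carathéodory function satisfying ‖G(t,x)‖ ≤ γ(t) + C‖x‖^{q/p} for some γ∈L^p(0,T), C≥0, q∈[1,∞), and which is locally Lipschitz in the second variable uniformly in t: there exist r>0 and L≥0 such that ‖G(t,x)−G(t,y)‖ ≤ L‖x−y‖ for all x,y in the closed ball of radius r around u₀ and a.e. t. Then there exists τ∈(0,T) and a unique continuous φ:[0,τ]→ℝ^m satisfying φ(t) = u₀ + (1/Γ(α))∫₀^t (t−s)^{α−1} G(s,φ(s)) ds for all t∈[0,τ]. -/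
/-!
Since `α > 1/p`, the kernel `s ↦ (t - s) ^ (α - 1)` lies in `L^{p'}` for the conjugate exponent
`p'`, with norm `kernelLpNorm (α - 1) p' t → 0` as `t → 0`. After changing `G` on a null set, it
is Carathéodory, dominated on the ball `closedBall u₀ r` by `g = |γ| + const ∈ L^p` and
`L`-Lipschitz there for every `t`. Hölder's inequality then bounds the integral term by
`Γ(α)⁻¹ kernelLpNorm (α - 1) p' t ‖g‖_p` and gives it a Hölder modulus of continuity in `t`.
For small `τ` the Picard map is a `1/2`-contraction of the complete space of ball-valued continuous
functions on `[0, τ]`, whose fixed point is a solution. Any continuous solution stays in the ball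
by continuous induction, and comparing two solutions at a maximum point of `‖φ - ψ‖` with the
contraction estimate shows that they coincide.
-/

open MeasureTheory Set Filter Topology
open scoped NNReal ENNReal

variable {E : Type*} [NormedAddCommGroup E] [NormedSpace ℝ E]

section Kernel

variable {a b c t : ℝ}

lemma integral_sub_rpow (hc : -1 < c) :
    ∫ s in a..b, (t - s) ^ c = ((t - a) ^ (c + 1) - (t - b) ^ (c + 1)) / (c + 1) := by
  rw [intervalIntegral.integral_comp_sub_left (fun x => x ^ c) t, integral_rpow (Or.inl hc)]

lemma intervalIntegrable_sub_rpow (hc : -1 < c) :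
    IntervalIntegrable (fun s => (t - s) ^ c) volume a b := by
  simpa using
    (intervalIntegral.intervalIntegrable_rpow' (a := t - a) (b := t - b) hc).comp_sub_left t

lemma integrableOn_sub_rpow (hc : -1 < c) (hab : a ≤ b) :
    IntegrableOn (fun s => (t - s) ^ c) (Ioc a b) :=
  (intervalIntegrable_iff_integrableOn_Ioc_of_le hab).mp (intervalIntegrable_sub_rpow hc)

lemma integral_sub_rpow_le (hc : -1 < c) (hc0 : c ≤ 0) (hab : a ≤ b) (hbt : b ≤ t) :
    ∫ s in a..b, (t - s) ^ c ≤ (b - a) ^ (c + 1) / (c + 1) := by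
  rw [integral_sub_rpow hc]
  gcongr
  · linarith
  have := Real.rpow_add_le_add_rpow (p := c + 1) (sub_nonneg.2 hbt) (sub_nonneg.2 hab)
    (by linarith) (by linarith)
  rw [sub_add_sub_cancel] at this
  linarith

lemma integral_sub_rpow_sub_sub_rpow_le (hc : -1 < c) {t' : ℝ} (ht : 0 ≤ t) (htt' : t ≤ t') :
    ∫ s in (0:ℝ)..t, ((t - s) ^ c - (t' - s) ^ c) ≤ (t' - t) ^ (c + 1) / (c + 1) := by
  rw [intervalIntegral.integral_sub (intervalIntegrable_sub_rpow hc)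
    (intervalIntegrable_sub_rpow hc), integral_sub_rpow hc, integral_sub_rpow hc, div_sub_div_same]
  gcongr
  · linarith
  have : t ^ (c + 1) ≤ t' ^ (c + 1) := Real.rpow_le_rpow ht htt' (by linarith)
  simp only [sub_zero, sub_self, Real.zero_rpow (by linarith : c + 1 ≠ 0)]
  linarith

variable {q : ℝ}

lemma norm_rpow_rpow {x : ℝ} (hx : 0 ≤ x) : ‖x ^ c‖ ^ q = x ^ (c * q) := by
  rw [Real.norm_of_nonneg (Real.rpow_nonneg hx _), Real.rpow_mul hx]

lemma memLp_sub_rpow (hq : 0 < q) (hcq : -1 < c * q) (hab : a ≤ b) (hbt : b ≤ t) :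
    MemLp (fun s => (t - s) ^ c) (ENNReal.ofReal q) (volume.restrict (Ioc a b)) := by
  have hmeas : Measurable fun s : ℝ => (t - s) ^ c :=
    (measurable_const.sub measurable_id).pow_const c
  rw [← integrable_norm_rpow_iff hmeas.aestronglyMeasurable (by simpa using hq)
    ENNReal.ofReal_ne_top, ENNReal.toReal_ofReal hq.le]
  exact (integrableOn_sub_rpow hcq hab).congr_fun
    (fun s hs => (norm_rpow_rpow (by linarith [hs.2])).symm) measurableSet_Ioc

lemma integral_norm_sub_rpow_rpow_le (hq : 0 < q) (hcq : -1 < c * q) (hc0 : c ≤ 0) (hab : a ≤ b)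
    (hbt : b ≤ t) :
    ∫ s in Ioc a b, ‖(t - s) ^ c‖ ^ q ≤ (b - a) ^ (c * q + 1) / (c * q + 1) := by
  rw [setIntegral_congr_fun measurableSet_Ioc (g := fun s => (t - s) ^ (c * q))
      (fun s hs => norm_rpow_rpow (by linarith [hs.2])), ← intervalIntegral.integral_of_le hab]
  exact integral_sub_rpow_le hcq (mul_nonpos_of_nonpos_of_nonneg hc0 hq.le) hab hbt

lemma integral_norm_sub_rpow_sub_sub_rpow_le (hq : 1 ≤ q) (hcq : -1 < c * q) (hc0 : c ≤ 0)
    {t' : ℝ} (ht : 0 ≤ t) (htt' : t ≤ t') :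
    ∫ s in Ioc 0 t, ‖(t' - s) ^ c - (t - s) ^ c‖ ^ q ≤ (t' - t) ^ (c * q + 1) / (c * q + 1) := by
  refine le_trans ?_ (integral_sub_rpow_sub_sub_rpow_le hcq ht htt')
  rw [intervalIntegral.integral_of_le ht, integral_Ioc_eq_integral_Ioo,
    integral_Ioc_eq_integral_Ioo]
  refine integral_mono_of_nonneg (.of_forall fun s => by positivity)
    (((integrableOn_sub_rpow hcq ht).sub (integrableOn_sub_rpow hcq ht)).mono_set
      Ioo_subset_Ioc_self)
    ((ae_restrict_iff' measurableSet_Ioo).2 (.of_forall fun s hs => ?_))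
  have hts : 0 < t - s := by linarith [hs.2]
  have hle : (t' - s) ^ c ≤ (t - s) ^ c := Real.rpow_le_rpow_of_nonpos hts (by linarith) hc0
  have key := Real.add_rpow_le_rpow_add (sub_nonneg.2 hle)
    (Real.rpow_nonneg (by linarith : 0 ≤ t' - s) c) hq
  rw [sub_add_cancel] at key
  simp only [norm_sub_rev, Real.norm_of_nonneg (sub_nonneg.2 hle)]
  rw [Real.rpow_mul hts.le, Real.rpow_mul (by linarith)]
  linarith

end Kernel

section Holder

variable {ι : Type*} [MeasurableSpace ι] {μ : Measure ι} {p q : ℝ}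

lemma integrable_smul_and_norm_integral_smul_le (hpq : p.HolderConjugate q) {k g : ι → ℝ}
    {F : ι → E} (hk : MemLp k (ENNReal.ofReal q) μ) (hg : MemLp g (ENNReal.ofReal p) μ)
    (hF : AEStronglyMeasurable F μ) (hFg : ∀ᵐ s ∂μ, ‖F s‖ ≤ g s) :
    Integrable (fun s => k s • F s) μ ∧
      ‖∫ s, k s • F s ∂μ‖ ≤ (∫ s, ‖k s‖ ^ q ∂μ) ^ (1 / q) * (∫ s, ‖g s‖ ^ p ∂μ) ^ (1 / p) := by
  have hFg' : ∀ᵐ s ∂μ, ‖F s‖ ≤ ‖g s‖ := hFg.mono fun s h => h.trans (le_abs_self _)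
  have := hpq.symm.ennrealOfReal
  have hkg : Integrable (fun s => ‖k s‖ * ‖g s‖) μ :=
    memLp_one_iff_integrable.1 (hg.norm.smul hk.norm)
  refine ⟨memLp_one_iff_integrable.1 ((hg.of_le hF hFg').smul hk), ?_⟩
  calc ‖∫ s, k s • F s ∂μ‖ ≤ ∫ s, ‖k s‖ * ‖F s‖ ∂μ := by
        simpa only [norm_smul] using norm_integral_le_integral_norm (fun s => k s • F s)
    _ ≤ ∫ s, ‖k s‖ * ‖g s‖ ∂μ :=
        integral_mono_of_nonneg (.of_forall fun s => by positivity) hkg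
          (hFg'.mono fun s h => mul_le_mul_of_nonneg_left h (norm_nonneg _))
    _ ≤ _ := integral_mul_norm_le_Lp_mul_Lq hpq.symm hk hg

lemma setIntegral_norm_rpow_rpow_mono_set {g : ι → ℝ} {S S' : Set ι}
    (hg : MemLp g (ENNReal.ofReal p) (μ.restrict S)) (hp : 0 < p) (hS' : S' ⊆ S) :
    (∫ s in S', ‖g s‖ ^ p ∂μ) ^ (1 / p) ≤ (∫ s in S, ‖g s‖ ^ p ∂μ) ^ (1 / p) := by
  have hint := hg.integrable_norm_rpow (by simpa using hp) ENNReal.ofReal_ne_top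
  rw [ENNReal.toReal_ofReal hp.le] at hint
  refine Real.rpow_le_rpow (integral_nonneg fun s => by positivity) ?_ (by positivity)
  exact setIntegral_mono_set hint (.of_forall fun s => by positivity) hS'.eventuallyLE

lemma Real.HolderConjugate.neg_one_lt_sub_one_mul {α : ℝ} (hpq : p.HolderConjugate q)
    (hα : 1 / p < α) : -1 < (α - 1) * q := by
  have h : q * (1 - p⁻¹) = 1 := calc
    q * (1 - p⁻¹) = q * q⁻¹ := by rw [← hpq.inv_add_inv_eq_one, add_sub_cancel_left]
    _ = 1 := mul_inv_cancel₀ hpq.symm.pos.ne'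
  rw [one_div] at hα
  nlinarith [mul_pos hpq.symm.pos (sub_pos.2 hα)]

end Holder

section KernelSmul

/-- The `L^q` norm of `s ↦ s ^ c` on `[0, h]`, when `c * q > -1`. -/
noncomputable def kernelLpNorm (c q h : ℝ) : ℝ := (h ^ (c * q + 1) / (c * q + 1)) ^ (1 / q)

lemma kernelLpNorm_nonneg {c q h : ℝ} (hcq : -1 < c * q) (hh : 0 ≤ h) : 0 ≤ kernelLpNorm c q h :=
  Real.rpow_nonneg (div_nonneg (Real.rpow_nonneg hh _) (by linarith)) _

lemma kernelLpNorm_mono {c q h h' : ℝ} (hcq : -1 < c * q) (hq : 0 < q) (hh : 0 ≤ h)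
    (hhh' : h ≤ h') :
    kernelLpNorm c q h ≤ kernelLpNorm c q h' := by
  unfold kernelLpNorm
  gcongr
  · exact div_nonneg (Real.rpow_nonneg hh _) (by linarith)
  · linarith
  · linarith

lemma tendsto_kernelLpNorm_zero {c q : ℝ} (hcq : -1 < c * q) (hq : 0 < q) :
    Tendsto (kernelLpNorm c q) (𝓝 0) (𝓝 0) := by
  have hβ : 0 < c * q + 1 := by linarith
  have hcont : ContinuousAt (kernelLpNorm c q) 0 :=
    ((Real.continuousAt_rpow_const 0 _ (Or.inr hβ.le)).div_const _).rpow_const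
      (Or.inr (by positivity))
  simpa [kernelLpNorm, Real.zero_rpow hβ.ne', Real.zero_rpow (inv_ne_zero hq.ne')] using
    hcont.tendsto

variable {a b c t p q : ℝ} {S : Set ℝ} {g : ℝ → ℝ} {F : ℝ → E}

lemma intervalIntegrable_and_norm_integral_sub_rpow_smul_le (hpq : p.HolderConjugate q)
    (hcq : -1 < c * q) (hc0 : c ≤ 0) (hab : a ≤ b) (hbt : b ≤ t) (hS : Ioc a b ⊆ S)
    (hg : MemLp g (ENNReal.ofReal p) (volume.restrict S))
    (hF : AEStronglyMeasurable F (volume.restrict (Ioc a b)))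
    (hFg : ∀ᵐ s ∂(volume.restrict (Ioc a b)), ‖F s‖ ≤ g s) :
    IntervalIntegrable (fun s => (t - s) ^ c • F s) volume a b ∧
      ‖∫ s in a..b, (t - s) ^ c • F s‖ ≤
        kernelLpNorm c q (b - a) * (∫ s in S, ‖g s‖ ^ p) ^ (1 / p) := by
  obtain ⟨hint, hle⟩ := integrable_smul_and_norm_integral_smul_le hpq
    (memLp_sub_rpow hpq.symm.pos hcq hab hbt) (hg.mono_measure (Measure.restrict_mono hS le_rfl))
    hF hFg
  refine ⟨(intervalIntegrable_iff_integrableOn_Ioc_of_le hab).2 hint, ?_⟩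
  rw [intervalIntegral.integral_of_le hab]
  refine hle.trans (mul_le_mul ?_ (setIntegral_norm_rpow_rpow_mono_set hg hpq.pos hS)
    (by positivity) (kernelLpNorm_nonneg hcq (by linarith)))
  exact Real.rpow_le_rpow (integral_nonneg fun s => by positivity)
    (integral_norm_sub_rpow_rpow_le hpq.symm.pos hcq hc0 hab hbt)
    (by have := hpq.symm.pos; positivity)

lemma norm_integral_sub_rpow_smul_sub_le (hpq : p.HolderConjugate q) (hcq : -1 < c * q)
    (hc0 : c ≤ 0) {t' : ℝ} (ht : 0 ≤ t) (htt' : t ≤ t') (hS : Ioc 0 t' ⊆ S)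
    (hg : MemLp g (ENNReal.ofReal p) (volume.restrict S))
    (hF : AEStronglyMeasurable F (volume.restrict (Ioc 0 t')))
    (hFg : ∀ᵐ s ∂(volume.restrict (Ioc 0 t')), ‖F s‖ ≤ g s) :
    ‖(∫ s in (0:ℝ)..t', (t' - s) ^ c • F s) - ∫ s in (0:ℝ)..t, (t - s) ^ c • F s‖ ≤
      2 * (kernelLpNorm c q (t' - t) * (∫ s in S, ‖g s‖ ^ p) ^ (1 / p)) := by
  have hsub₁ : Ioc 0 t ⊆ Ioc 0 t' := Ioc_subset_Ioc_right htt'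
  have hsub₂ : Ioc t t' ⊆ Ioc 0 t' := Ioc_subset_Ioc_left ht
  have hF₁ := hF.mono_measure (Measure.restrict_mono hsub₁ le_rfl)
  have hFg₁ := ae_restrict_of_ae_restrict_of_subset hsub₁ hFg
  have hi₁ := (intervalIntegrable_and_norm_integral_sub_rpow_smul_le (t := t') hpq hcq hc0 ht htt'
    (hsub₁.trans hS) hg hF₁ hFg₁).1
  have hi₀ := (intervalIntegrable_and_norm_integral_sub_rpow_smul_le (t := t) hpq hcq hc0 ht le_rfl
    (hsub₁.trans hS) hg hF₁ hFg₁).1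
  obtain ⟨hi₂, htail⟩ := intervalIntegrable_and_norm_integral_sub_rpow_smul_le (t := t') hpq hcq
    hc0 htt' le_rfl (hsub₂.trans hS) hg (hF.mono_measure (Measure.restrict_mono hsub₂ le_rfl))
    (ae_restrict_of_ae_restrict_of_subset hsub₂ hFg)
  have hsplit : (∫ s in (0:ℝ)..t', (t' - s) ^ c • F s) - ∫ s in (0:ℝ)..t, (t - s) ^ c • F s =
      (∫ s in (0:ℝ)..t, ((t' - s) ^ c - (t - s) ^ c) • F s) + ∫ s in t..t', (t' - s) ^ c • F s := by
    simp only [sub_smul]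
    rw [intervalIntegral.integral_sub hi₁ hi₀,
      ← intervalIntegral.integral_add_adjacent_intervals hi₁ hi₂]
    abel
  have hhead : ‖∫ s in (0:ℝ)..t, ((t' - s) ^ c - (t - s) ^ c) • F s‖ ≤
      kernelLpNorm c q (t' - t) * (∫ s in S, ‖g s‖ ^ p) ^ (1 / p) := by
    obtain ⟨-, hle⟩ := integrable_smul_and_norm_integral_smul_le hpq
      ((memLp_sub_rpow hpq.symm.pos hcq ht htt').sub (memLp_sub_rpow hpq.symm.pos hcq ht le_rfl))
      (hg.mono_measure (Measure.restrict_mono (hsub₁.trans hS) le_rfl)) hF₁ hFg₁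
    rw [intervalIntegral.integral_of_le ht]
    refine hle.trans (mul_le_mul ?_ (setIntegral_norm_rpow_rpow_mono_set hg hpq.pos
      (hsub₁.trans hS)) (by positivity) (kernelLpNorm_nonneg hcq (by linarith)))
    exact Real.rpow_le_rpow (integral_nonneg fun s => by positivity)
      (integral_norm_sub_rpow_sub_sub_rpow_le hpq.symm.lt.le hcq hc0 ht htt')
      (by have := hpq.symm.pos; positivity)
  rw [hsplit]
  linarith [norm_add_le (∫ s in (0:ℝ)..t, ((t' - s) ^ c - (t - s) ^ c) • F s)
    (∫ s in t..t', (t' - s) ^ c • F s)]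

lemma norm_integral_sub_rpow_smul_le_of_norm_le (hc : -1 < c) (ht : 0 ≤ t) {D : ℝ}
    (hFD : ∀ s ∈ Ioc 0 t, ‖F s‖ ≤ D) :
    ‖∫ s in (0:ℝ)..t, (t - s) ^ c • F s‖ ≤ D * (t ^ (c + 1) / (c + 1)) := by
  have hbound : ∀ s ∈ Ioc 0 t, ‖(t - s) ^ c • F s‖ ≤ D * (t - s) ^ c := fun s hs => by
    have hts : 0 ≤ t - s := by linarith [hs.2]
    rw [norm_smul, Real.norm_of_nonneg (Real.rpow_nonneg hts _), mul_comm]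
    exact mul_le_mul_of_nonneg_right (hFD s hs) (Real.rpow_nonneg hts _)
  refine (intervalIntegral.norm_integral_le_of_norm_le ht (.of_forall hbound)
    ((intervalIntegrable_sub_rpow hc).const_mul D)).trans_eq ?_
  rw [intervalIntegral.integral_const_mul, integral_sub_rpow hc, sub_self, sub_zero,
    Real.zero_rpow (by linarith)]
  ring

end KernelSmul

section Continuity

variable {X : Type*} [PseudoMetricSpace X] {φ : ℝ → X}

lemma continuousOn_of_dist_le_modulus {s : Set ℝ} {ω : ℝ → ℝ} (hω : Tendsto ω (𝓝 0) (𝓝 0))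
    (h : ∀ x ∈ s, ∀ y ∈ s, x ≤ y → dist (φ x) (φ y) ≤ ω (y - x)) : ContinuousOn φ s := by
  intro x hx
  rw [ContinuousWithinAt, tendsto_iff_dist_tendsto_zero]
  have hω' : Tendsto (fun y => ω |y - x|) (𝓝[s] x) (𝓝 0) := by
    refine (hω.comp ?_).mono_left nhdsWithin_le_nhds
    simpa using (continuous_sub_right x).abs.tendsto x
  refine squeeze_zero' (.of_forall fun _ => dist_nonneg)
    (eventually_nhdsWithin_of_forall fun y hy => ?_) hω'
  rcases le_total x y with hxy | hyx
  · rw [dist_comm, abs_of_nonneg (sub_nonneg.2 hxy)]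
    exact h x hx y hy hxy
  · rw [abs_of_nonpos (sub_nonpos.2 hyx), neg_sub]
    exact h y hy x hx hyx

lemma mapsTo_closedBall_of_forall_mapsTo {a b ρ r : ℝ} {c : X} (hρr : ρ < r)
    (hφ : ContinuousOn φ (Icc a b)) (ha : φ a ∈ Metric.closedBall c ρ)
    (h : ∀ x ∈ Icc a b, MapsTo φ (Icc a x) (Metric.closedBall c r) →
      φ x ∈ Metric.closedBall c ρ) :
    MapsTo φ (Icc a b) (Metric.closedBall c ρ) := by
  let s := {x | MapsTo φ (Icc a x) (Metric.closedBall c ρ)}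
  have hρr' : Metric.closedBall c ρ ⊆ Metric.closedBall c r :=
    Metric.closedBall_subset_closedBall hρr.le
  -- below a limit point `x` of `s ∩ [a, b]` lie points of `s`; `x` itself is handled by continuity
  have hs : IsClosed (s ∩ Icc a b) := by
    have hZ : IsClosed (Icc a b ∩ φ ⁻¹' Metric.closedBall c ρ) :=
      hφ.preimage_isClosed_of_isClosed isClosed_Icc Metric.isClosed_closedBall
    refine isClosed_of_closure_subset fun x hx => ?_
    have hsZ : s ∩ Icc a b ⊆ Icc a b ∩ φ ⁻¹' Metric.closedBall c ρ :=
      fun y hy => ⟨hy.2, hy.1 (right_mem_Icc.2 hy.2.1)⟩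
    have hxZ := closure_minimal hsZ hZ hx
    refine ⟨fun u hu => ?_, hxZ.1⟩
    rcases hu.2.lt_or_eq with hux | rfl
    · obtain ⟨y, hyu, hy⟩ := mem_closure_iff_nhds.1 hx (Ioi u) (Ioi_mem_nhds hux)
      exact hy.1 ⟨hu.1, le_of_lt hyu⟩
    · exact hxZ.2
  have has : a ∈ s := fun u hu => by rwa [le_antisymm hu.2 hu.1]
  refine fun x hx => hs.Icc_subset_of_forall_mem_nhdsWithin has (fun x ⟨hxs, hxab⟩ => ?_) hx
    (right_mem_Icc.2 hx.1)
  have hnear : {y | y ∈ Icc a b ∧ φ y ∈ Metric.ball c r} ∈ 𝓝[>] x := by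
    refine nhdsWithin_le_of_mem (Icc_mem_nhdsGT_of_mem hxab) (inter_mem self_mem_nhdsWithin
      (hφ x (Ico_subset_Icc_self hxab) (Metric.isOpen_ball.mem_nhds ?_)))
    exact Metric.closedBall_subset_ball hρr (hxs (right_mem_Icc.2 hxab.1))
  obtain ⟨y₀, hxy₀, hy₀⟩ := mem_nhdsGT_iff_exists_Ioo_subset.1 hnear
  have hr : ∀ y ∈ Ioo x y₀, MapsTo φ (Icc a y) (Metric.closedBall c r) := fun y hy u hu => by
    rcases le_or_gt u x with hux | hxu
    · exact hρr' (hxs ⟨hu.1, hux⟩)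
    · exact Metric.ball_subset_closedBall (hy₀ ⟨hxu, hu.2.trans_lt hy.2⟩).2
  refine mem_of_superset (Ioo_mem_nhdsGT hxy₀) fun y hy u hu => ?_
  rcases le_or_gt u x with hux | hxu
  · exact hxs ⟨hu.1, hux⟩
  · have hu' : u ∈ Ioo x y₀ := ⟨hxu, hu.2.trans_lt hy.2⟩
    exact h u (hy₀ hu').1 (hr u hu')

end Continuity

lemma LipschitzOnWith.norm_le_add_mul {V W : Type*} [SeminormedAddCommGroup V]
    [SeminormedAddCommGroup W] {f : V → W} {K : ℝ≥0} {c x : V} {r : ℝ}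
    (hf : LipschitzOnWith K f (Metric.closedBall c r)) (hx : x ∈ Metric.closedBall c r) :
    ‖f x‖ ≤ ‖f c‖ + K * r := by
  have hc : c ∈ Metric.closedBall c r := Metric.mem_closedBall_self (dist_nonneg.trans hx)
  calc ‖f x‖ ≤ ‖f c‖ + dist (f x) (f c) := by
        rw [dist_eq_norm]; exact norm_le_insert' _ _
    _ ≤ ‖f c‖ + K * r := by
        gcongr
        exact (hf.dist_le_mul x hx c hc).trans (mul_le_mul_of_nonneg_left hx K.2)

lemma exists_measurable_forall_and_ae_eq {ι X Y : Type*} [MeasurableSpace ι] [MeasurableSpace Y]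
    [Zero Y] {μ : Measure ι} {G : ι → X → Y} {P : ι → (X → Y) → Prop}
    (hGm : ∀ x, Measurable (G · x)) (hP : ∀ᵐ t ∂μ, P t (G t)) (hP0 : ∀ t, P t 0) :
    ∃ G' : ι → X → Y, (∀ x, Measurable (G' · x)) ∧ (∀ t, P t (G' t)) ∧ ∀ᵐ t ∂μ, G' t = G t := by
  classical
  obtain ⟨S, hSμ, hSm, hSP⟩ := hP.exists_measurable_mem
  refine ⟨fun t x => if t ∈ S then G t x else 0,
    fun x => Measurable.ite hSm (hGm x) measurable_const, fun t => ?_, ?_⟩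
  · by_cases ht : t ∈ S
    · simp only [ht, if_true]
      exact hSP t ht
    · simp only [ht, if_false]
      exact hP0 t
  · filter_upwards [hSμ] with t ht
    simp [ht]

noncomputable def riemannLiouville (α : ℝ) (F : ℝ → E) (t : ℝ) : E :=
  (Real.Gamma α)⁻¹ • ∫ s in (0:ℝ)..t, (t - s) ^ (α - 1) • F s

def IsIntegralSolutionOn (G : ℝ → E → E) (α : ℝ) (u₀ : E) (τ : ℝ) (φ : ℝ → E) : Prop :=
  ContinuousOn φ (Icc 0 τ) ∧
    ∀ t ∈ Icc (0:ℝ) τ, φ t = u₀ + riemannLiouville α (fun s => G s (φ s)) t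

lemma isIntegralSolutionOn_congr {G G' : ℝ → E → E} {α τ : ℝ} {u₀ : E} {φ : ℝ → E}
    (hGG' : ∀ᵐ s ∂(volume.restrict (Icc 0 τ)), G s = G' s) :
    IsIntegralSolutionOn G α u₀ τ φ ↔ IsIntegralSolutionOn G' α u₀ τ φ := by
  refine and_congr_right fun _ => forall₂_congr fun t ht => ?_
  suffices (∫ s in (0:ℝ)..t, (t - s) ^ (α - 1) • G s (φ s)) =
      ∫ s in (0:ℝ)..t, (t - s) ^ (α - 1) • G' s (φ s) by
    rw [riemannLiouville, riemannLiouville, this]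
  refine intervalIntegral.integral_congr_ae ?_
  filter_upwards [(ae_restrict_iff' measurableSet_Icc).1 hGG'] with s hs hst
  rw [uIoc_of_le ht.1] at hst
  rw [hs ⟨hst.1.le, hst.2.trans ht.2⟩]

section Caratheodory

variable {V : Type*} [NormedAddCommGroup V] [MeasurableSpace V] [BorelSpace V]
  [SecondCountableTopology V] {G : ℝ → V → V} {g : ℝ → ℝ} {u₀ : V} {r t : ℝ} {φ : ℝ → V}

lemma aestronglyMeasurable_comp_and_ae_norm_le (hGc : ∀ t, Continuous (G t))
    (hGm : ∀ x, Measurable (G · x)) (hGg : ∀ t, ∀ x ∈ Metric.closedBall u₀ r, ‖G t x‖ ≤ g t)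
    (hφ : ContinuousOn φ (Icc 0 t)) (hφr : MapsTo φ (Icc 0 t) (Metric.closedBall u₀ r)) :
    AEStronglyMeasurable (fun s => G s (φ s)) (volume.restrict (Ioc 0 t)) ∧
      ∀ᵐ s ∂(volume.restrict (Ioc 0 t)), ‖G s (φ s)‖ ≤ g s := by
  have hG : Measurable (Function.uncurry fun x s => G s x) :=
    measurable_uncurry_of_continuous_of_measurable hGc hGm
  refine ⟨(hG.comp_aemeasurable (((hφ.mono Ioc_subset_Icc_self).aemeasurable
    measurableSet_Ioc).prodMk aemeasurable_id)).aestronglyMeasurable, ?_⟩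
  exact ae_restrict_of_forall_mem measurableSet_Ioc fun s hs =>
    hGg s _ (hφr (Ioc_subset_Icc_self hs))

end Caratheodory

section Picard

variable [MeasurableSpace E] [BorelSpace E] [SecondCountableTopology E]
  {G : ℝ → E → E} {g : ℝ → ℝ} {u₀ : E} {α p q r t τ T : ℝ} {K : ℝ≥0} {φ ψ : ℝ → E}

lemma intervalIntegrable_and_norm_riemannLiouville_comp_le (hpq : p.HolderConjugate q)
    (hαq : -1 < (α - 1) * q) (hα1 : α ≤ 1) (hGc : ∀ t, Continuous (G t))
    (hGm : ∀ x, Measurable (G · x)) (hg : MemLp g (ENNReal.ofReal p) (volume.restrict (Icc 0 T)))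
    (hGg : ∀ t, ∀ x ∈ Metric.closedBall u₀ r, ‖G t x‖ ≤ g t) (ht : 0 ≤ t) (htτ : t ≤ τ)
    (hτT : τ ≤ T) (hφ : ContinuousOn φ (Icc 0 t))
    (hφr : MapsTo φ (Icc 0 t) (Metric.closedBall u₀ r)) :
    IntervalIntegrable (fun s => (t - s) ^ (α - 1) • G s (φ s)) volume 0 t ∧
      ‖riemannLiouville α (fun s => G s (φ s)) t‖ ≤
        ‖(Real.Gamma α)⁻¹‖ *
          (kernelLpNorm (α - 1) q τ * (∫ s in Icc 0 T, ‖g s‖ ^ p) ^ (1 / p)) := by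
  obtain ⟨hF, hFg⟩ := aestronglyMeasurable_comp_and_ae_norm_le hGc hGm hGg hφ hφr
  obtain ⟨hint, hle⟩ := intervalIntegrable_and_norm_integral_sub_rpow_smul_le (t := t) hpq hαq
    (by linarith) ht le_rfl (S := Icc 0 T) (fun s hs => ⟨hs.1.le, hs.2.trans (htτ.trans hτT)⟩)
    hg hF hFg
  refine ⟨hint, ?_⟩
  rw [riemannLiouville, norm_smul]
  refine mul_le_mul_of_nonneg_left (hle.trans (mul_le_mul_of_nonneg_right ?_ (by positivity)))
    (norm_nonneg _)
  simpa using kernelLpNorm_mono hαq hpq.symm.pos ht htτ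

lemma continuousOn_riemannLiouville_comp (hpq : p.HolderConjugate q) (hαq : -1 < (α - 1) * q)
    (hα1 : α ≤ 1) (hGc : ∀ t, Continuous (G t)) (hGm : ∀ x, Measurable (G · x))
    (hg : MemLp g (ENNReal.ofReal p) (volume.restrict (Icc 0 T)))
    (hGg : ∀ t, ∀ x ∈ Metric.closedBall u₀ r, ‖G t x‖ ≤ g t) (hτT : τ ≤ T)
    (hφ : ContinuousOn φ (Icc 0 τ)) (hφr : MapsTo φ (Icc 0 τ) (Metric.closedBall u₀ r)) :
    ContinuousOn (riemannLiouville α fun s => G s (φ s)) (Icc 0 τ) := by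
  set M := (∫ s in Icc 0 T, ‖g s‖ ^ p) ^ (1 / p)
  refine continuousOn_of_dist_le_modulus
    (ω := fun h => ‖(Real.Gamma α)⁻¹‖ * (2 * (kernelLpNorm (α - 1) q h * M))) ?_
    fun x hx y hy hxy => ?_
  · simpa using (((tendsto_kernelLpNorm_zero hαq hpq.symm.pos).mul_const M).const_mul 2).const_mul
      ‖(Real.Gamma α)⁻¹‖
  · obtain ⟨hF, hFg⟩ := aestronglyMeasurable_comp_and_ae_norm_le hGc hGm hGg
      (hφ.mono (Icc_subset_Icc_right hy.2)) (hφr.mono_left (Icc_subset_Icc_right hy.2))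
    rw [riemannLiouville, riemannLiouville, dist_smul₀, dist_eq_norm, norm_sub_rev]
    exact mul_le_mul_of_nonneg_left (norm_integral_sub_rpow_smul_sub_le hpq hαq (by linarith)
      hx.1 hxy (fun s hs => ⟨hs.1.le, hs.2.trans (hy.2.trans hτT)⟩) hg hF hFg) (norm_nonneg _)

lemma dist_riemannLiouville_comp_le (hpq : p.HolderConjugate q) (hαq : -1 < (α - 1) * q)
    (hα0 : 0 < α) (hα1 : α ≤ 1) (hGc : ∀ t, Continuous (G t)) (hGm : ∀ x, Measurable (G · x))
    (hg : MemLp g (ENNReal.ofReal p) (volume.restrict (Icc 0 T)))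
    (hGg : ∀ t, ∀ x ∈ Metric.closedBall u₀ r, ‖G t x‖ ≤ g t)
    (hGL : ∀ t, LipschitzOnWith K (G t) (Metric.closedBall u₀ r)) (ht : 0 ≤ t) (htτ : t ≤ τ)
    (hτT : τ ≤ T) (hφ : ContinuousOn φ (Icc 0 t))
    (hφr : MapsTo φ (Icc 0 t) (Metric.closedBall u₀ r))
    (hψ : ContinuousOn ψ (Icc 0 t)) (hψr : MapsTo ψ (Icc 0 t) (Metric.closedBall u₀ r)) {D : ℝ}
    (hD : ∀ s ∈ Icc 0 t, dist (φ s) (ψ s) ≤ D) :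
    dist (riemannLiouville α (fun s => G s (φ s)) t) (riemannLiouville α (fun s => G s (ψ s)) t) ≤
      ‖(Real.Gamma α)⁻¹‖ * (K * (τ ^ α / α)) * D := by
  have hiφ := (intervalIntegrable_and_norm_riemannLiouville_comp_le hpq hαq hα1 hGc hGm hg hGg
    ht htτ hτT hφ hφr).1
  have hiψ := (intervalIntegrable_and_norm_riemannLiouville_comp_le hpq hαq hα1 hGc hGm hg hGg
    ht htτ hτT hψ hψr).1
  have hGD : ∀ s ∈ Ioc 0 t, ‖G s (φ s) - G s (ψ s)‖ ≤ K * D := fun s hs => by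
    have hs' := Ioc_subset_Icc_self hs
    rw [← dist_eq_norm]
    exact ((hGL s).dist_le_mul _ (hφr hs') _ (hψr hs')).trans
      (mul_le_mul_of_nonneg_left (hD s hs') K.2)
  have hint := norm_integral_sub_rpow_smul_le_of_norm_le (c := α - 1) (by linarith) ht hGD
  rw [sub_add_cancel] at hint
  simp only [smul_sub] at hint
  rw [riemannLiouville, riemannLiouville, dist_smul₀, dist_eq_norm,
    ← intervalIntegral.integral_sub hiφ hiψ]
  have hD0 : 0 ≤ D := dist_nonneg.trans (hD 0 ⟨le_rfl, ht⟩)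
  calc ‖(Real.Gamma α)⁻¹‖ * ‖∫ s in (0:ℝ)..t, (t - s) ^ (α - 1) • G s (φ s) -
        (t - s) ^ (α - 1) • G s (ψ s)‖
      ≤ ‖(Real.Gamma α)⁻¹‖ * (K * D * (t ^ α / α)) := by gcongr
    _ = ‖(Real.Gamma α)⁻¹‖ * (K * (t ^ α / α)) * D := by ring
    _ ≤ ‖(Real.Gamma α)⁻¹‖ * (K * (τ ^ α / α)) * D := by gcongr

lemma mapsTo_closedBall_of_isIntegralSolutionOn (hpq : p.HolderConjugate q)
    (hαq : -1 < (α - 1) * q) (hα1 : α ≤ 1) (hGc : ∀ t, Continuous (G t))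
    (hGm : ∀ x, Measurable (G · x)) (hg : MemLp g (ENNReal.ofReal p) (volume.restrict (Icc 0 T)))
    (hGg : ∀ t, ∀ x ∈ Metric.closedBall u₀ r, ‖G t x‖ ≤ g t) (hr : 0 < r) (hτ : 0 ≤ τ)
    (hτT : τ ≤ T)
    (hball : ‖(Real.Gamma α)⁻¹‖ * (kernelLpNorm (α - 1) q τ * (∫ s in Icc 0 T, ‖g s‖ ^ p) ^ (1 / p))
      ≤ r / 2)
    (hφ : IsIntegralSolutionOn G α u₀ τ φ) : MapsTo φ (Icc 0 τ) (Metric.closedBall u₀ r) := by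
  refine (mapsTo_closedBall_of_forall_mapsTo (half_lt_self hr) hφ.1 ?_
    fun x hx hxr => ?_).mono_right (Metric.closedBall_subset_closedBall (half_le_self hr.le))
  · rw [hφ.2 0 ⟨le_rfl, hτ⟩]
    simp [riemannLiouville, (half_pos hr).le]
  · rw [Metric.mem_closedBall, hφ.2 x hx, dist_self_add_left]
    exact ((intervalIntegrable_and_norm_riemannLiouville_comp_le hpq hαq hα1 hGc hGm hg hGg hx.1
      hx.2 hτT (hφ.1.mono (Icc_subset_Icc_right hx.2)) hxr).2).trans hball

theorem exists_isIntegralSolutionOn [CompleteSpace E] (hpq : p.HolderConjugate q)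
    (hαq : -1 < (α - 1) * q) (hα0 : 0 < α) (hα1 : α ≤ 1) (hGc : ∀ t, Continuous (G t))
    (hGm : ∀ x, Measurable (G · x)) (hg : MemLp g (ENNReal.ofReal p) (volume.restrict (Icc 0 T)))
    (hGg : ∀ t, ∀ x ∈ Metric.closedBall u₀ r, ‖G t x‖ ≤ g t)
    (hGL : ∀ t, LipschitzOnWith K (G t) (Metric.closedBall u₀ r)) (hτ : 0 ≤ τ) (hτT : τ ≤ T)
    (hball : ‖(Real.Gamma α)⁻¹‖ * (kernelLpNorm (α - 1) q τ * (∫ s in Icc 0 T, ‖g s‖ ^ p) ^ (1 / p))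
      ≤ r)
    (hcontr : ‖(Real.Gamma α)⁻¹‖ * (K * (τ ^ α / α)) ≤ 1 / 2) :
    ∃ φ, IsIntegralSolutionOn G α u₀ τ φ := by
  have hr : 0 ≤ r := le_trans (by have := kernelLpNorm_nonneg hαq hτ; positivity) hball
  let B : Set C(Icc (0:ℝ) τ, E) := {f | ∀ x, f x ∈ Metric.closedBall u₀ r}
  have hB : IsClosed B := by
    simp only [B, ofPred_forall]
    exact isClosed_iInter fun x => Metric.isClosed_closedBall.preimage (continuous_eval_const x)
  have : CompleteSpace B := IsClosed.completeSpace_coe (hs := hB)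
  have : Nonempty B := ⟨⟨.const _ u₀, fun _ => Metric.mem_closedBall_self hr⟩⟩
  have hext : ∀ f : B, ContinuousOn (IccExtend hτ f.1) (Icc 0 τ) ∧
      MapsTo (IccExtend hτ f.1) (Icc 0 τ) (Metric.closedBall u₀ r) :=
    fun f => ⟨f.1.continuous.Icc_extend'.continuousOn, fun _ _ => f.2 _⟩
  have hP : ∀ f : B, ∃ f' : B, ∀ x : Icc (0:ℝ) τ,
      f'.1 x = u₀ + riemannLiouville α (fun s => G s (IccExtend hτ f.1 s)) x := by
    intro f
    obtain ⟨hfc, hfr⟩ := hext f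
    refine ⟨⟨⟨fun x => u₀ + riemannLiouville α (fun s => G s (IccExtend hτ f.1 s)) x,
      (continuousOn_const.add (continuousOn_riemannLiouville_comp hpq hαq hα1 hGc hGm hg hGg hτT
        hfc hfr)).comp_continuous continuous_subtype_val Subtype.property⟩, fun x => ?_⟩,
      fun x => rfl⟩
    rw [ContinuousMap.coe_mk, Metric.mem_closedBall, dist_self_add_left]
    exact ((intervalIntegrable_and_norm_riemannLiouville_comp_le hpq hαq hα1 hGc hGm hg hGg x.2.1
      x.2.2 hτT (hfc.mono (Icc_subset_Icc_right x.2.2))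
      (hfr.mono_left (Icc_subset_Icc_right x.2.2))).2).trans hball
  choose P hP using hP
  have hPc : ContractingWith (1 / 2) P := by
    refine ⟨by norm_num, LipschitzWith.of_dist_le_mul fun f f' => ?_⟩
    rw [Subtype.dist_eq, ContinuousMap.dist_le (by positivity)]
    intro x
    rw [hP, hP, dist_add_left]
    obtain ⟨hfc, hfr⟩ := hext f
    obtain ⟨hf'c, hf'r⟩ := hext f'
    have hsub : Icc 0 (x : ℝ) ⊆ Icc 0 τ := Icc_subset_Icc_right x.2.2
    refine (dist_riemannLiouville_comp_le hpq hαq hα0 hα1 hGc hGm hg hGg hGL x.2.1 x.2.2 hτT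
      (hfc.mono hsub) (hfr.mono_left hsub) (hf'c.mono hsub) (hf'r.mono_left hsub)
      fun s _ => ContinuousMap.dist_apply_le_dist _).trans ?_
    rw [← Subtype.dist_eq]
    push_cast
    exact mul_le_mul_of_nonneg_right hcontr dist_nonneg
  obtain ⟨f, hf⟩ : ∃ f, P f = f := ⟨_, hPc.fixedPoint_isFixedPt⟩
  refine ⟨IccExtend hτ f.1, (hext f).1, fun t ht => ?_⟩
  conv_lhs => rw [IccExtend_of_mem hτ _ ht, ← hf]
  exact hP f ⟨t, ht⟩

lemma eqOn_of_isIntegralSolutionOn (hpq : p.HolderConjugate q) (hαq : -1 < (α - 1) * q)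
    (hα0 : 0 < α) (hα1 : α ≤ 1) (hGc : ∀ t, Continuous (G t)) (hGm : ∀ x, Measurable (G · x))
    (hg : MemLp g (ENNReal.ofReal p) (volume.restrict (Icc 0 T)))
    (hGg : ∀ t, ∀ x ∈ Metric.closedBall u₀ r, ‖G t x‖ ≤ g t)
    (hGL : ∀ t, LipschitzOnWith K (G t) (Metric.closedBall u₀ r)) (hτT : τ ≤ T)
    (hcontr : ‖(Real.Gamma α)⁻¹‖ * (K * (τ ^ α / α)) ≤ 1 / 2)
    (hφ : IsIntegralSolutionOn G α u₀ τ φ) (hψ : IsIntegralSolutionOn G α u₀ τ ψ)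
    (hφr : MapsTo φ (Icc 0 τ) (Metric.closedBall u₀ r))
    (hψr : MapsTo ψ (Icc 0 τ) (Metric.closedBall u₀ r)) : EqOn φ ψ (Icc 0 τ) := by
  intro t ht
  obtain ⟨t₀, ht₀, hmax⟩ := isCompact_Icc.exists_isMaxOn ⟨t, ht⟩
    (continuous_dist.comp_continuousOn (hφ.1.prodMk hψ.1))
  set D := dist (φ t₀) (ψ t₀)
  have hhalf : ∀ t ∈ Icc 0 τ, dist (φ t) (ψ t) ≤ 1 / 2 * D := by
    intro t ht
    rw [hφ.2 t ht, hψ.2 t ht, dist_add_left]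
    have hsub : Icc 0 t ⊆ Icc 0 τ := Icc_subset_Icc_right ht.2
    refine (dist_riemannLiouville_comp_le hpq hαq hα0 hα1 hGc hGm hg hGg hGL ht.1 ht.2 hτT
      (hφ.1.mono hsub) (hφr.mono_left hsub) (hψ.1.mono hsub) (hψr.mono_left hsub)
      fun s hs => hmax (hsub hs)).trans ?_
    exact mul_le_mul_of_nonneg_right hcontr dist_nonneg
  have hD : D ≤ 0 := by linarith [hhalf t₀ ht₀]
  exact dist_le_zero.1 ((hmax ht).trans hD)

theorem exists_unique_isIntegralSolutionOn [CompleteSpace E] (hpq : p.HolderConjugate q)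
    (hαq : -1 < (α - 1) * q) (hα0 : 0 < α) (hα1 : α ≤ 1) (hGc : ∀ t, Continuous (G t))
    (hGm : ∀ x, Measurable (G · x)) (hg : MemLp g (ENNReal.ofReal p) (volume.restrict (Icc 0 T)))
    (hGg : ∀ t, ∀ x ∈ Metric.closedBall u₀ r, ‖G t x‖ ≤ g t)
    (hGL : ∀ t, LipschitzOnWith K (G t) (Metric.closedBall u₀ r)) (hr : 0 < r) (hT : 0 < T) :
    ∃ τ, 0 < τ ∧ τ < T ∧ (∃ φ, IsIntegralSolutionOn G α u₀ τ φ) ∧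
      ∀ φ ψ, IsIntegralSolutionOn G α u₀ τ φ → IsIntegralSolutionOn G α u₀ τ ψ →
        EqOn φ ψ (Icc 0 τ) := by
  set M := (∫ s in Icc 0 T, ‖g s‖ ^ p) ^ (1 / p)
  have hball : Tendsto (fun τ => ‖(Real.Gamma α)⁻¹‖ * (kernelLpNorm (α - 1) q τ * M)) (𝓝 0)
      (𝓝 0) := by
    simpa using ((tendsto_kernelLpNorm_zero hαq hpq.symm.pos).mul_const M).const_mul _
  have hcontr : Tendsto (fun τ => ‖(Real.Gamma α)⁻¹‖ * (K * (τ ^ α / α))) (𝓝 0) (𝓝 0) := by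
    have : Tendsto (fun τ : ℝ => τ ^ α) (𝓝 0) (𝓝 0) := by
      simpa [Real.zero_rpow hα0.ne'] using
        (Real.continuousAt_rpow_const 0 α (Or.inr hα0.le)).tendsto
    simpa using ((this.div_const α).const_mul (K : ℝ)).const_mul ‖(Real.Gamma α)⁻¹‖
  obtain ⟨τ, ⟨hτball, hτcontr⟩, hτ0, hτT⟩ :=
    ((((hball.eventually (ge_mem_nhds (half_pos hr))).and
      (hcontr.eventually (ge_mem_nhds one_half_pos))).filter_mono nhdsWithin_le_nhds).and
      (Ioo_mem_nhdsGT hT)).exists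
  refine ⟨τ, hτ0, hτT, exists_isIntegralSolutionOn hpq hαq hα0 hα1 hGc hGm hg hGg hGL hτ0.le
    hτT.le (hτball.trans (half_le_self hr.le)) hτcontr, fun φ ψ hφ hψ => ?_⟩
  exact eqOn_of_isIntegralSolutionOn hpq hαq hα0 hα1 hGc hGm hg hGg hGL hτT.le hτcontr hφ hψ
    (mapsTo_closedBall_of_isIntegralSolutionOn hpq hαq hα1 hGc hGm hg hGg hr hτ0.le hτT.le
      hτball hφ)
    (mapsTo_closedBall_of_isIntegralSolutionOn hpq hαq hα1 hGc hGm hg hGg hr hτ0.le hτT.le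
      hτball hψ)

end Picard

theorem stmt_13_general (T p α : ℝ) (hT : 0 < T) (hp : 1 < p) (hαp : 1 / p < α) (hα1 : α < 1)
    (m : ℕ) (u₀ : EuclideanSpace ℝ (Fin m))
    (G : ℝ → EuclideanSpace ℝ (Fin m) → EuclideanSpace ℝ (Fin m))
    (hGmeas : ∀ x, Measurable (fun t => G t x))
    (hGcont : ∀ᵐ t ∂(volume.restrict (Set.Icc 0 T)), Continuous (fun x => G t x))
    (γ : ℝ → ℝ)
    (hγ : MeasureTheory.MemLp γ (ENNReal.ofReal p) (volume.restrict (Set.Icc 0 T)))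
    (C q : ℝ)
    (hgrowth : ∀ x, ∀ᵐ t ∂(volume.restrict (Set.Icc 0 T)),
      ‖G t x‖ ≤ γ t + C * ‖x‖ ^ (q / p))
    (r L : ℝ) (hr : 0 < r) (hL : 0 ≤ L)
    (hlip : ∀ᵐ t ∂(volume.restrict (Set.Icc 0 T)),
      ∀ x ∈ Metric.closedBall u₀ r, ∀ y ∈ Metric.closedBall u₀ r,
        ‖G t x - G t y‖ ≤ L * ‖x - y‖) :
    ∃ τ : ℝ, 0 < τ ∧ τ < T ∧
      (∃ φ : ℝ → EuclideanSpace ℝ (Fin m),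
        ContinuousOn φ (Set.Icc 0 τ) ∧
        ∀ t ∈ Set.Icc (0:ℝ) τ,
          φ t = u₀ + (Real.Gamma α)⁻¹ •
            ∫ s in (0:ℝ)..t, ((t - s) ^ (α - 1)) • G s (φ s)) ∧
      (∀ φ ψ : ℝ → EuclideanSpace ℝ (Fin m),
        (ContinuousOn φ (Set.Icc 0 τ) ∧
          ∀ t ∈ Set.Icc (0:ℝ) τ,
            φ t = u₀ + (Real.Gamma α)⁻¹ •
              ∫ s in (0:ℝ)..t, ((t - s) ^ (α - 1)) • G s (φ s)) →
        (ContinuousOn ψ (Set.Icc 0 τ) ∧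
          ∀ t ∈ Set.Icc (0:ℝ) τ,
            ψ t = u₀ + (Real.Gamma α)⁻¹ •
              ∫ s in (0:ℝ)..t, ((t - s) ^ (α - 1)) • G s (ψ s)) →
        Set.EqOn φ ψ (Set.Icc 0 τ)) := by
  have hα0 : 0 < α := lt_trans (by positivity) hαp
  have hpq : p.HolderConjugate p.conjExponent := .conjExponent hp
  set g : ℝ → ℝ := fun t => |γ t| + (|C * ‖u₀‖ ^ (q / p)| + L * r)
  have hg : MemLp g (ENNReal.ofReal p) (volume.restrict (Icc 0 T)) :=
    hγ.norm.add (memLp_const _)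
  let P t (f : EuclideanSpace ℝ (Fin m) → EuclideanSpace ℝ (Fin m)) : Prop :=
    Continuous f ∧ (∀ x ∈ Metric.closedBall u₀ r, ‖f x‖ ≤ g t) ∧
      LipschitzOnWith L.toNNReal f (Metric.closedBall u₀ r)
  have hGP : ∀ᵐ t ∂(volume.restrict (Icc 0 T)), P t (G t) := by
    filter_upwards [hGcont, hgrowth u₀, hlip] with t hc hgr hl
    have hLip : LipschitzOnWith L.toNNReal (G t) (Metric.closedBall u₀ r) :=
      .of_dist_le_mul fun x hx y hy => by
        simpa only [dist_eq_norm, Real.coe_toNNReal _ hL] using hl x hx y hy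
    refine ⟨hc, fun x hx => (hLip.norm_le_add_mul hx).trans ?_, hLip⟩
    rw [Real.coe_toNNReal _ hL]
    linarith [le_abs_self (γ t), le_abs_self (C * ‖u₀‖ ^ (q / p))]
  have hP0 : ∀ t, P t 0 := fun t =>
    ⟨continuous_const, fun x _ => by simp only [g, Pi.zero_apply, norm_zero]; positivity,
      (LipschitzWith.const' 0).lipschitzOnWith⟩
  obtain ⟨G', hG'm, hG', hG'G⟩ := exists_measurable_forall_and_ae_eq hGmeas hGP hP0
  obtain ⟨τ, hτ0, hτT, ⟨φ, hφ⟩, huniq⟩ := exists_unique_isIntegralSolutionOn hpq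
    (hpq.neg_one_lt_sub_one_mul hαp) hα0 hα1.le (fun t => (hG' t).1) hG'm hg
    (fun t => (hG' t).2.1) (fun t => (hG' t).2.2) hr hT
  have hiff (φ) := isIntegralSolutionOn_congr (α := α) (u₀ := u₀) (φ := φ)
    ((ae_restrict_of_ae_restrict_of_subset (Icc_subset_Icc_right hτT.le) hG'G).mono
      fun s h => h.symm)
  exact ⟨τ, hτ0, hτT, ⟨φ, (hiff φ).2 hφ⟩,
    fun φ ψ hφ hψ => huniq φ ψ ((hiff φ).1 hφ) ((hiff ψ).1 hψ)⟩

theorem stmt_13 (T p α : ℝ) (hT : 0 < T) (hp : 1 < p) (hαp : 1 / p < α) (hα1 : α < 1)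
    (m : ℕ) (u₀ : EuclideanSpace ℝ (Fin m))
    (G : ℝ → EuclideanSpace ℝ (Fin m) → EuclideanSpace ℝ (Fin m))
    (hGmeas : ∀ x, Measurable (fun t => G t x))
    (hGcont : ∀ᵐ t ∂(volume.restrict (Set.Icc 0 T)), Continuous (fun x => G t x))
    (γ : ℝ → ℝ)
    (hγ : MeasureTheory.MemLp γ (ENNReal.ofReal p) (volume.restrict (Set.Icc 0 T)))
    (C q : ℝ) (hC : 0 ≤ C) (hq : 1 ≤ q)
    (hgrowth : ∀ x, ∀ᵐ t ∂(volume.restrict (Set.Icc 0 T)),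
      ‖G t x‖ ≤ γ t + C * ‖x‖ ^ (q / p))
    (r L : ℝ) (hr : 0 < r) (hL : 0 ≤ L)
    (hlip : ∀ᵐ t ∂(volume.restrict (Set.Icc 0 T)),
      ∀ x ∈ Metric.closedBall u₀ r, ∀ y ∈ Metric.closedBall u₀ r,
        ‖G t x - G t y‖ ≤ L * ‖x - y‖) :
    ∃ τ : ℝ, 0 < τ ∧ τ < T ∧
      (∃ φ : ℝ → EuclideanSpace ℝ (Fin m),
        ContinuousOn φ (Set.Icc 0 τ) ∧
        ∀ t ∈ Set.Icc (0:ℝ) τ,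
          φ t = u₀ + (Real.Gamma α)⁻¹ •
            ∫ s in (0:ℝ)..t, ((t - s) ^ (α - 1)) • G s (φ s)) ∧
      (∀ φ ψ : ℝ → EuclideanSpace ℝ (Fin m),
        (ContinuousOn φ (Set.Icc 0 τ) ∧
          ∀ t ∈ Set.Icc (0:ℝ) τ,
            φ t = u₀ + (Real.Gamma α)⁻¹ •
              ∫ s in (0:ℝ)..t, ((t - s) ^ (α - 1)) • G s (φ s)) →
        (ContinuousOn ψ (Set.Icc 0 τ) ∧
          ∀ t ∈ Set.Icc (0:ℝ) τ,
            ψ t = u₀ + (Real.Gamma α)⁻¹ •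
              ∫ s in (0:ℝ)..t, ((t - s) ^ (α - 1)) • G s (ψ s)) →
        Set.EqOn φ ψ (Set.Icc 0 τ)) :=
  stmt_13_general T p α hT hp hαp hα1 m u₀ G hGmeas hGcont γ hγ C q hgrowth r L hr hL hlip
end

section
/- Let T>0, p∈(1,∞), α∈(1/p,1), τ∈(0,T], and let G:[0,T]×ℝ^m→ℝ^m be a Carathéodory map with ‖G(t,x)‖ ≤ γ(t)+C‖x‖^{q/p} for some γ∈L^p(0,T) and q∈[1,∞). If φ:[0,τ)→ℝ^m is continuous, belongs to L^q(0,τ;ℝ^m), and satisfies φ(t) = u₀ + (1/Γ(α))∫₀^t (t−s)^{α−1}G(s,φ(s)) ds for all t∈[0,τ), then φ is uniformly continuous on [0,τ): indeed for 0<t₁<t₂<τ, ‖φ(t₁)−φ(t₂)‖ ≤ (2/Γ(α))((p−1)/(αp−1))^{1−1/p} (t₂−t₁)^{α−1/p} ‖G(·,φ(·))‖_{L^p(0,τ)}. Consequently φ extends uniquely to a continuous function on [0,τ]. -/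
/-!
Write `g = G(·, φ(·))`; the growth bound puts `g` in `L^p`. Subtracting the integral equations at
`t₁ < t₂` leaves, up to the factor `1 / Γ(α)`,
`∫₀^{t₁} ((t₁ - s)^{α-1} - (t₂ - s)^{α-1}) g(s) ds - ∫_{t₁}^{t₂} (t₂ - s)^{α-1} g(s) ds`.
By Hölder with the conjugate exponent `q = p / (p - 1)` each piece is at most `‖g‖_p` times the
`L^q` norm of its kernel, and since `(x - y)^q ≤ x^q - y^q` for `0 ≤ y ≤ x` both kernel norms are at
most `((t₂ - t₁)^{β+1} / (β + 1))^{1/q}` with `β = (α - 1) q > -1`, because `αp > 1`. This Hölder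
modulus makes `φ` uniformly continuous on `(0, τ)`, so `φ` has a limit at `τ` in the complete space
`ℝ^m`, which gives the unique continuous extension.
-/

open MeasureTheory Set Filter Topology

theorem Real.sub_rpow_le_rpow_sub_rpow {a b r : ℝ} (hb : 0 ≤ b) (hba : b ≤ a) (hr : 1 ≤ r) :
    (a - b) ^ r ≤ a ^ r - b ^ r := by
  have h := Real.add_rpow_le_rpow_add (sub_nonneg.2 hba) hb hr
  rw [sub_add_cancel] at h
  linarith

theorem memLp_ofReal_iff_integrable_norm_rpow {α E : Type*} {_ : MeasurableSpace α}
    {μ : Measure α} [NormedAddCommGroup E] {f : α → E} {p : ℝ} (hp : 0 < p)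
    (hf : AEStronglyMeasurable f μ) :
    MemLp f (ENNReal.ofReal p) μ ↔ Integrable (fun x => ‖f x‖ ^ p) μ := by
  rw [← integrable_norm_rpow_iff hf (by simpa using hp) ENNReal.ofReal_ne_top,
    ENNReal.toReal_ofReal hp.le]

section Caratheodory

variable {α X E : Type*} [MeasurableSpace α] {μ : Measure α}

theorem aestronglyMeasurable_comp_of_caratheodory [TopologicalSpace X]
    [TopologicalSpace.MetrizableSpace X] [MeasurableSpace X] [SecondCountableTopology X]
    [OpensMeasurableSpace X]
    [TopologicalSpace E] [TopologicalSpace.PseudoMetrizableSpace E] [Zero E]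
    {G : α → X → E} {f : α → X} (hG_meas : ∀ x, StronglyMeasurable fun t => G t x)
    (hG_cont : ∀ᵐ t ∂μ, Continuous (G t)) (hf : AEMeasurable f μ) :
    AEStronglyMeasurable (fun t => G t (f t)) μ := by
  classical
  set N := toMeasurable μ {t | ¬Continuous (G t)}
  have hN : ∀ᵐ t ∂μ, t ∉ N := by
    rw [← measure_eq_zero_iff_ae_notMem, measure_toMeasurable]
    exact ae_iff.1 hG_cont
  -- Redefining `G` on the null set of bad times makes it continuous in the state for every time.
  have hG' : StronglyMeasurable (Function.uncurry fun x t => if t ∈ N then 0 else G t x) := by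
    refine stronglyMeasurable_uncurry_of_continuous_of_stronglyMeasurable (fun t => ?_)
      (fun x => .ite (measurableSet_toMeasurable _ _) stronglyMeasurable_const (hG_meas x))
    by_cases ht : t ∈ N
    · simp only [ht, if_true, continuous_const]
    · simpa only [ht, if_false] using not_not.1 fun h => ht (subset_toMeasurable _ _ h)
  refine (hG'.aestronglyMeasurable.comp_aemeasurable (hf.prodMk aemeasurable_id)).congr ?_
  filter_upwards [hN] with t ht
  simp [ht]

theorem ae_forall_le_of_forall_ae_le [TopologicalSpace X] [TopologicalSpace.SeparableSpace X]
    {F H : α → X → ℝ} (hF : ∀ᵐ t ∂μ, Continuous (F t)) (hH : ∀ᵐ t ∂μ, Continuous (H t))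
    (h : ∀ x, ∀ᵐ t ∂μ, F t x ≤ H t x) : ∀ᵐ t ∂μ, ∀ x, F t x ≤ H t x := by
  obtain ⟨s, hs_count, hs_dense⟩ := TopologicalSpace.exists_countable_dense X
  filter_upwards [(ae_ball_iff hs_count).2 fun x _ => h x, hF, hH] with t hts hFt hHt x
  have : closure s ⊆ {x | F t x ≤ H t x} :=
    (isClosed_le hFt hHt).closure_subset_iff.2 hts
  exact this (hs_dense.closure_eq ▸ mem_univ x)

end Caratheodory

section Nemytskii

variable {α X E : Type*} [MeasurableSpace α] {μ : Measure α}
  [NormedAddCommGroup X] [MeasurableSpace X] [BorelSpace X] [SecondCountableTopology X]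
  [NormedAddCommGroup E]

theorem memLp_comp_of_caratheodory_growth {p q C : ℝ} (hp : 0 < p) (hq : 0 ≤ q)
    {G : α → X → E} {γ : α → ℝ} {f : α → X} (hG_meas : ∀ x, StronglyMeasurable fun t => G t x)
    (hG_cont : ∀ᵐ t ∂μ, Continuous (G t)) (hγ : MemLp γ (ENNReal.ofReal p) μ)
    (hgrowth : ∀ x, ∀ᵐ t ∂μ, ‖G t x‖ ≤ γ t + C * ‖x‖ ^ (q / p))
    (hf : AEMeasurable f μ) (hfq : Integrable (fun t => ‖f t‖ ^ q) μ) :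
    MemLp (fun t => G t (f t)) (ENNReal.ofReal p) μ := by
  have hbound : ∀ᵐ t ∂μ, ‖G t (f t)‖ ≤ γ t + C * ‖f t‖ ^ (q / p) := by
    have hcont : ∀ t, Continuous fun x : X => γ t + C * ‖x‖ ^ (q / p) := fun t =>
      continuous_const.add (continuous_const.mul
        (continuous_norm.rpow_const fun _ => Or.inr (div_nonneg hq hp.le)))
    filter_upwards [ae_forall_le_of_forall_ae_le (hG_cont.mono fun t ht => continuous_norm.comp ht)
      (ae_of_all μ hcont) hgrowth] with t ht using ht (f t)
  have hfpow : MemLp (fun t => ‖f t‖ ^ (q / p)) (ENNReal.ofReal p) μ := by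
    refine (memLp_ofReal_iff_integrable_norm_rpow hp
      (hf.norm.pow_const _).aestronglyMeasurable).2 ?_
    refine hfq.congr (ae_of_all μ fun t => ?_)
    simp only [Real.norm_of_nonneg (Real.rpow_nonneg (norm_nonneg _) _),
      ← Real.rpow_mul (norm_nonneg _), div_mul_cancel₀ _ hp.ne']
  refine (hγ.add (hfpow.const_mul C)).of_le
    (aestronglyMeasurable_comp_of_caratheodory hG_meas hG_cont hf) ?_
  filter_upwards [hbound] with t ht
  exact ht.trans (le_abs_self _)

end Nemytskii

theorem integrableOn_sub_rpow_Ioc {β a b c : ℝ} (hβ : -1 < β) (hab : a ≤ b) :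
    IntegrableOn (fun s => (c - s) ^ β) (Ioc a b) := by
  have h : IntervalIntegrable (fun s => (c - s) ^ β) volume a b := by
    simpa [sub_sub_cancel] using
      (intervalIntegral.intervalIntegrable_rpow' hβ (a := c - a) (b := c - b)).comp_sub_left c
  rwa [intervalIntegrable_iff_integrableOn_Ioc_of_le hab] at h

theorem setIntegral_sub_rpow_Ioc {β a b c : ℝ} (hβ : -1 < β) (hab : a ≤ b) :
    ∫ s in Ioc a b, (c - s) ^ β = ((c - a) ^ (β + 1) - (c - b) ^ (β + 1)) / (β + 1) := by
  rw [← intervalIntegral.integral_of_le hab,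
    intervalIntegral.integral_comp_sub_left (fun x => x ^ β) c, integral_rpow (Or.inl hβ)]

theorem norm_sub_rpow_rpow {γ r c s : ℝ} (hs : s ≤ c) :
    ‖(c - s) ^ γ‖ ^ r = (c - s) ^ (γ * r) := by
  rw [Real.norm_of_nonneg (Real.rpow_nonneg (sub_nonneg.2 hs) _),
    ← Real.rpow_mul (sub_nonneg.2 hs)]

theorem memLp_sub_rpow_Ioc {γ r a c : ℝ} (hr : 0 < r) (hγr : -1 < γ * r) (hac : a ≤ c) :
    MemLp (fun s => (c - s) ^ γ) (ENNReal.ofReal r) (volume.restrict (Ioc a c)) :=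
  (memLp_ofReal_iff_integrable_norm_rpow hr
    ((measurable_const.sub measurable_id).pow_const γ).aestronglyMeasurable).2 <|
    (integrableOn_sub_rpow_Ioc hγr hac).congr_fun
      (fun _ hs => (norm_sub_rpow_rpow hs.2).symm) measurableSet_Ioc

theorem setIntegral_norm_sub_rpow_rpow_Ioc {γ r a c : ℝ} (hγr : -1 < γ * r) (hac : a ≤ c) :
    ∫ s in Ioc a c, ‖(c - s) ^ γ‖ ^ r = (c - a) ^ (γ * r + 1) / (γ * r + 1) := by
  rw [setIntegral_congr_fun measurableSet_Ioc fun _ hs => norm_sub_rpow_rpow hs.2,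
    setIntegral_sub_rpow_Ioc hγr hac, sub_self, Real.zero_rpow (by linarith), sub_zero]

theorem setIntegral_norm_sub_rpow_sub_sub_rpow_le {γ r a t₁ t₂ : ℝ} (hr : 1 ≤ r) (hγ : γ ≤ 0)
    (hγr : -1 < γ * r) (ha : a ≤ t₁) (h12 : t₁ ≤ t₂) :
    ∫ s in Ioc a t₁, ‖(t₁ - s) ^ γ - (t₂ - s) ^ γ‖ ^ r
      ≤ (t₂ - t₁) ^ (γ * r + 1) / (γ * r + 1) := by
  have hk₁ := memLp_sub_rpow_Ioc (zero_lt_one.trans_le hr) hγr ha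
  have hk₂ := (memLp_sub_rpow_Ioc (c := t₂) (zero_lt_one.trans_le hr) hγr
    (ha.trans h12)).mono_measure (Measure.restrict_mono (Ioc_subset_Ioc_right h12) le_rfl)
  have hpointwise : ∀ s ∈ Ioo a t₁, ‖(t₁ - s) ^ γ - (t₂ - s) ^ γ‖ ^ r
      ≤ (t₁ - s) ^ (γ * r) - (t₂ - s) ^ (γ * r) := by
    intro s hs
    have hs₁ : 0 < t₁ - s := sub_pos.2 hs.2
    have hmono : (t₂ - s) ^ γ ≤ (t₁ - s) ^ γ := Real.rpow_le_rpow_of_nonpos hs₁ (by linarith) hγ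
    rw [Real.norm_of_nonneg (sub_nonneg.2 hmono), Real.rpow_mul hs₁.le,
      Real.rpow_mul (hs₁.le.trans (by linarith))]
    exact Real.sub_rpow_le_rpow_sub_rpow (Real.rpow_nonneg (by linarith) _) hmono hr
  have hi₁ := integrableOn_sub_rpow_Ioc (c := t₁) hγr ha
  have hi₂ := integrableOn_sub_rpow_Ioc (c := t₂) hγr ha
  have hγr1 : 0 < γ * r + 1 := by linarith
  calc ∫ s in Ioc a t₁, ‖(t₁ - s) ^ γ - (t₂ - s) ^ γ‖ ^ r
      ≤ ∫ s in Ioc a t₁, ((t₁ - s) ^ (γ * r) - (t₂ - s) ^ (γ * r)) := by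
        rw [integral_Ioc_eq_integral_Ioo, integral_Ioc_eq_integral_Ioo]
        refine setIntegral_mono_on ?_ ((hi₁.sub hi₂).mono_set Ioo_subset_Ioc_self)
          measurableSet_Ioo hpointwise
        have hk := hk₁.sub hk₂
        exact IntegrableOn.mono_set ((memLp_ofReal_iff_integrable_norm_rpow
          (zero_lt_one.trans_le hr) hk.1).1 hk) Ioo_subset_Ioc_self
    _ = ((t₁ - a) ^ (γ * r + 1) - (t₂ - a) ^ (γ * r + 1) + (t₂ - t₁) ^ (γ * r + 1))
          / (γ * r + 1) := by
        rw [integral_sub hi₁ hi₂, setIntegral_sub_rpow_Ioc hγr ha,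
          setIntegral_sub_rpow_Ioc hγr ha, sub_self, Real.zero_rpow hγr1.ne']
        ring
    _ ≤ (t₂ - t₁) ^ (γ * r + 1) / (γ * r + 1) := by
        gcongr
        linarith [Real.rpow_le_rpow (sub_nonneg.2 ha) (sub_le_sub_right h12 a) hγr1.le]

section Holder

variable {α E : Type*} [MeasurableSpace α] {μ : Measure α} [NormedAddCommGroup E]
  [NormedSpace ℝ E] {k : α → ℝ} {g : α → E} {p q : ℝ}

theorem integrable_smul_of_memLp (hpq : q.HolderConjugate p)
    (hk : MemLp k (ENNReal.ofReal q) μ) (hg : MemLp g (ENNReal.ofReal p) μ) :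
    Integrable (fun s => k s • g s) μ := by
  have : ENNReal.HolderTriple (ENNReal.ofReal q) (ENNReal.ofReal p) 1 :=
    ⟨by rw [inv_one]; exact hpq.inv_add_inv_ennreal⟩
  exact memLp_one_iff_integrable.1 (hg.smul hk)

theorem norm_integral_smul_le (hpq : q.HolderConjugate p) (hk : MemLp k (ENNReal.ofReal q) μ)
    (hg : MemLp g (ENNReal.ofReal p) μ) :
    ‖∫ s, k s • g s ∂μ‖ ≤ (∫ s, ‖k s‖ ^ q ∂μ) ^ (1 / q) * (∫ s, ‖g s‖ ^ p ∂μ) ^ (1 / p) :=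
  calc ‖∫ s, k s • g s ∂μ‖ ≤ ∫ s, ‖k s‖ * ‖g s‖ ∂μ := by
        simpa only [norm_smul] using norm_integral_le_integral_norm (fun s => k s • g s)
    _ ≤ _ := by simpa only [norm_norm] using integral_mul_norm_le_Lp_mul_Lq hpq hk hg.norm

theorem norm_setIntegral_smul_le_of_subset {S U : Set α} {K : ℝ} (hpq : q.HolderConjugate p)
    (hSU : S ⊆ U) (hk : MemLp k (ENNReal.ofReal q) (μ.restrict S))
    (hg : MemLp g (ENNReal.ofReal p) (μ.restrict U)) (hK : ∫ s in S, ‖k s‖ ^ q ∂μ ≤ K) :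
    ‖∫ s in S, k s • g s ∂μ‖ ≤ K ^ (1 / q) * (∫ s in U, ‖g s‖ ^ p ∂μ) ^ (1 / p) := by
  have hq := hpq.pos
  have hp := hpq.symm.pos
  refine (norm_integral_smul_le hpq hk (hg.mono_measure (Measure.restrict_mono hSU le_rfl))).trans
    (mul_le_mul ?_ ?_ (by positivity) ?_)
  · exact Real.rpow_le_rpow (integral_nonneg fun _ => by positivity) hK (by positivity)
  · refine Real.rpow_le_rpow (integral_nonneg fun _ => by positivity) ?_ (by positivity)
    exact setIntegral_mono_set ((memLp_ofReal_iff_integrable_norm_rpow hp hg.1).1 hg)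
      (ae_of_all _ fun _ => by positivity) hSU.eventuallyLE
  · exact Real.rpow_nonneg ((integral_nonneg fun _ => by positivity).trans hK) _

end Holder

section RiemannLiouville

theorem sub_one_mul_conjExponent_add_one {p : ℝ} (α : ℝ) (hp : 1 < p) :
    (α - 1) * p.conjExponent + 1 = (α * p - 1) / (p - 1) := by
  have := sub_pos.2 hp
  simp only [Real.conjExponent]
  field_simp
  ring

theorem neg_one_lt_sub_one_mul_conjExponent {p α : ℝ} (hp : 1 < p) (hαp : 1 / p < α) :
    -1 < (α - 1) * p.conjExponent := by
  have : 0 < α * p - 1 := by rw [div_lt_iff₀ (by linarith)] at hαp; linarith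
  have : 0 < (α * p - 1) / (p - 1) := div_pos this (sub_pos.2 hp)
  linarith [sub_one_mul_conjExponent_add_one α hp]

theorem rpow_sub_one_mul_conjExponent_div_rpow_eq {p α d : ℝ} (hp : 1 < p) (hαp : 1 / p < α)
    (hd : 0 ≤ d) :
    (d ^ ((α - 1) * p.conjExponent + 1) / ((α - 1) * p.conjExponent + 1)) ^ (1 / p.conjExponent)
      = ((p - 1) / (α * p - 1)) ^ (1 - 1 / p) * d ^ (α - 1 / p) := by
  have hβ := neg_one_lt_sub_one_mul_conjExponent hp hαp
  have hq_inv : 1 / p.conjExponent = 1 - 1 / p := by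
    simp only [Real.conjExponent]; field_simp
  rw [Real.div_rpow (Real.rpow_nonneg hd _) (by linarith), ← Real.rpow_mul hd, div_eq_mul_inv,
    ← Real.inv_rpow (by linarith), sub_one_mul_conjExponent_add_one α hp, inv_div, hq_inv,
    mul_comm]
  congr 2
  have := sub_pos.2 hp
  field_simp

variable {E : Type*} [NormedAddCommGroup E] [NormedSpace ℝ E]

theorem intervalIntegrable_rpow_smul {p α a b c : ℝ} (hp : 1 < p) (hαp : 1 / p < α) {g : ℝ → E}
    (hab : a ≤ b) (hbc : b ≤ c) (hg : MemLp g (ENNReal.ofReal p) (volume.restrict (Ioc a b))) :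
    IntervalIntegrable (fun s => (c - s) ^ (α - 1) • g s) volume a b := by
  have hpq := Real.HolderConjugate.conjExponent hp
  refine (intervalIntegrable_iff_integrableOn_Ioc_of_le hab).2
    (integrable_smul_of_memLp hpq.symm ?_ hg)
  exact (memLp_sub_rpow_Ioc hpq.symm.pos (neg_one_lt_sub_one_mul_conjExponent hp hαp)
    (hab.trans hbc)).mono_measure (Measure.restrict_mono (Ioc_subset_Ioc_right hbc) le_rfl)

theorem norm_integral_rpow_smul_sub_le {p α a t₁ t₂ : ℝ} (hp : 1 < p) (hαp : 1 / p < α)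
    (hα1 : α ≤ 1) {g : ℝ → E} (ha : a ≤ t₁) (h12 : t₁ ≤ t₂)
    (hg : MemLp g (ENNReal.ofReal p) (volume.restrict (Ioc a t₂))) :
    ‖(∫ s in a..t₁, (t₁ - s) ^ (α - 1) • g s) - ∫ s in a..t₂, (t₂ - s) ^ (α - 1) • g s‖
      ≤ 2 * ((p - 1) / (α * p - 1)) ^ (1 - 1 / p) * (t₂ - t₁) ^ (α - 1 / p) *
        (∫ s in a..t₂, ‖g s‖ ^ p) ^ (1 / p) := by
  have hpq := (Real.HolderConjugate.conjExponent hp).symm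
  have hβ := neg_one_lt_sub_one_mul_conjExponent hp hαp
  have hg₁ := hg.mono_measure (Measure.restrict_mono (Ioc_subset_Ioc_right h12) le_rfl)
  have hg₂ := hg.mono_measure (Measure.restrict_mono (Ioc_subset_Ioc_left ha) le_rfl)
  have hI₁ := intervalIntegrable_rpow_smul (c := t₁) hp hαp ha le_rfl hg₁
  have hI₂₁ := intervalIntegrable_rpow_smul (c := t₂) hp hαp ha h12 hg₁
  have hI₂₂ := intervalIntegrable_rpow_smul (c := t₂) hp hαp h12 le_rfl hg₂
  have hk₂ := memLp_sub_rpow_Ioc (c := t₂) hpq.pos hβ (ha.trans h12)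
  have hsplit : (∫ s in a..t₁, (t₁ - s) ^ (α - 1) • g s) - ∫ s in a..t₂, (t₂ - s) ^ (α - 1) • g s
      = (∫ s in Ioc a t₁, ((t₁ - s) ^ (α - 1) - (t₂ - s) ^ (α - 1)) • g s)
        - ∫ s in Ioc t₁ t₂, (t₂ - s) ^ (α - 1) • g s := by
    rw [← intervalIntegral.integral_add_adjacent_intervals hI₂₁ hI₂₂,
      sub_add_eq_sub_sub, ← intervalIntegral.integral_sub hI₁ hI₂₁,
      intervalIntegral.integral_of_le ha, intervalIntegral.integral_of_le h12]
    simp only [sub_smul]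
  have hfirst := norm_setIntegral_smul_le_of_subset hpq (Ioc_subset_Ioc_right h12)
    ((memLp_sub_rpow_Ioc hpq.pos hβ ha).sub
      (hk₂.mono_measure (Measure.restrict_mono (Ioc_subset_Ioc_right h12) le_rfl))) hg
    (setIntegral_norm_sub_rpow_sub_sub_rpow_le hpq.lt.le (by linarith) hβ ha h12)
  have hsecond := norm_setIntegral_smul_le_of_subset hpq (Ioc_subset_Ioc_left ha)
    (hk₂.mono_measure (Measure.restrict_mono (Ioc_subset_Ioc_left ha) le_rfl)) hg
    (setIntegral_norm_sub_rpow_rpow_Ioc hβ h12).le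
  rw [hsplit, intervalIntegral.integral_of_le (ha.trans h12), two_mul, add_mul, add_mul,
    ← rpow_sub_one_mul_conjExponent_div_rpow_eq hp hαp (sub_nonneg.2 h12)]
  exact norm_sub_le_of_le hfirst hsecond

theorem norm_sub_le_of_eq_add_integral_rpow_smul {p α τ t₁ t₂ : ℝ} (hp : 1 < p)
    (hαp : 1 / p < α) (hα1 : α ≤ 1) {u₀ : E} {g φ : ℝ → E}
    (hg : MemLp g (ENNReal.ofReal p) (volume.restrict (Ioo 0 τ)))
    (hφ : ∀ t ∈ Ico (0 : ℝ) τ,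
      φ t = u₀ + (Real.Gamma α)⁻¹ • ∫ s in (0 : ℝ)..t, (t - s) ^ (α - 1) • g s)
    (h₁ : 0 ≤ t₁) (h₁₂ : t₁ ≤ t₂) (h₂ : t₂ < τ) :
    ‖φ t₁ - φ t₂‖ ≤ (2 / Real.Gamma α) * ((p - 1) / (α * p - 1)) ^ (1 - 1 / p) *
      (t₂ - t₁) ^ (α - 1 / p) * (∫ s in (0 : ℝ)..τ, ‖g s‖ ^ p) ^ (1 / p) := by
  have hp0 : 0 < p := one_pos.trans hp
  have hΓ : 0 < (Real.Gamma α)⁻¹ :=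
    inv_pos.2 (Real.Gamma_pos_of_pos ((one_div_pos.2 hp0).trans hαp))
  have hg_pow : IntervalIntegrable (fun s => ‖g s‖ ^ p) volume 0 τ := by
    rw [intervalIntegrable_iff_integrableOn_Ioo_of_le (h₁.trans_lt (h₁₂.trans_lt h₂)).le]
    exact (memLp_ofReal_iff_integrable_norm_rpow hp0 hg.1).1 hg
  have hint_mono : (∫ s in (0 : ℝ)..t₂, ‖g s‖ ^ p) ^ (1 / p)
      ≤ (∫ s in (0 : ℝ)..τ, ‖g s‖ ^ p) ^ (1 / p) :=
    Real.rpow_le_rpow (intervalIntegral.integral_nonneg (h₁.trans h₁₂) fun _ _ => by positivity)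
      (intervalIntegral.integral_mono_interval le_rfl (h₁.trans h₁₂) h₂.le
        (ae_of_all _ fun _ => by positivity) hg_pow) (by positivity)
  have hcoef : 0 ≤ 2 * ((p - 1) / (α * p - 1)) ^ (1 - 1 / p) * (t₂ - t₁) ^ (α - 1 / p) := by
    have : 0 < α * p - 1 := by rw [div_lt_iff₀ hp0] at hαp; linarith
    have := sub_pos.2 hp
    have := sub_nonneg.2 h₁₂
    positivity
  have hRL := norm_integral_rpow_smul_sub_le hp hαp hα1 h₁ h₁₂
    (hg.mono_measure (Measure.restrict_mono (Ioc_subset_Ioo_right h₂) le_rfl))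
  rw [hφ t₁ ⟨h₁, h₁₂.trans_lt h₂⟩, hφ t₂ ⟨h₁.trans h₁₂, h₂⟩, add_sub_add_left_eq_sub,
    ← smul_sub, norm_smul, Real.norm_of_nonneg hΓ.le]
  exact (mul_le_mul_of_nonneg_left (hRL.trans (mul_le_mul_of_nonneg_left hint_mono hcoef))
    hΓ.le).trans_eq (by ring)

end RiemannLiouville

theorem uniformContinuousOn_of_dist_le_rpow {E : Type*} [PseudoMetricSpace E] {f : ℝ → E}
    {s : Set ℝ} {K η : ℝ} (hη : 0 < η)
    (h : ∀ x ∈ s, ∀ y ∈ s, x < y → dist (f x) (f y) ≤ K * (y - x) ^ η) :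
    UniformContinuousOn f s := by
  rw [Metric.uniformContinuousOn_iff]
  intro ε hε
  have hK : Tendsto (fun d : ℝ => K * d ^ η) (𝓝 0) (𝓝 0) := by
    simpa [Real.zero_rpow hη.ne'] using
      ((continuous_id.rpow_const fun _ => Or.inr hη.le).const_mul K).tendsto 0
  obtain ⟨δ, hδ, hδε⟩ := Metric.tendsto_nhds_nhds.1 hK ε hε
  have hclose : ∀ x ∈ s, ∀ y ∈ s, x < y → y - x < δ → dist (f x) (f y) < ε := by
    intro x hx y hy hxy hyx
    have := hδε (x := y - x) (by rwa [Real.dist_eq, sub_zero, abs_of_pos (sub_pos.2 hxy)])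
    rw [Real.dist_eq, sub_zero] at this
    exact (h x hx y hy hxy).trans_lt ((le_abs_self _).trans_lt this)
  refine ⟨δ, hδ, fun x hx y hy hxy => ?_⟩
  rw [Real.dist_eq] at hxy
  rcases lt_trichotomy x y with hlt | rfl | hgt
  · exact hclose x hx y hy hlt (by rw [abs_sub_comm] at hxy; exact (le_abs_self _).trans_lt hxy)
  · simpa using hε
  · rw [dist_comm]; exact hclose y hy x hx hgt ((le_abs_self _).trans_lt hxy)

theorem exists_tendsto_nhdsWithin_of_uniformContinuousOn {α β : Type*} [UniformSpace α]
    [UniformSpace β] [CompleteSpace β] {f : α → β} {s : Set α} {x : α}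
    (hf : UniformContinuousOn f s) (hx : x ∈ closure s) : ∃ y, Tendsto f (𝓝[s] x) (𝓝 y) := by
  have := mem_closure_iff_nhdsWithin_neBot.1 hx
  exact cauchy_map_iff_exists_tendsto.1
    ((cauchy_nhds.mono nhdsWithin_le_nhds).map_of_le hf inf_le_right)

theorem exists_continuousOn_Icc_extension {E : Type*} [TopologicalSpace E] [T3Space E]
    {f : ℝ → E} {a b : ℝ} {L : E} (hab : a < b) (hf : ContinuousOn f (Ico a b))
    (hL : Tendsto f (𝓝[<] b) (𝓝 L)) :
    ∃ ψ : ℝ → E, ContinuousOn ψ (Icc a b) ∧ EqOn ψ f (Ico a b) ∧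
      ∀ ψ' : ℝ → E, ContinuousOn ψ' (Icc a b) → EqOn ψ' f (Ico a b) → ψ' b = ψ b := by
  have hclosure : closure (Ico a b) = Icc a b := closure_Ico hab.ne
  have hψ_cont : ContinuousOn (extendFrom (Ico a b) f) (Icc a b) := by
    refine continuousOn_extendFrom hclosure.ge fun x hx => ?_
    rcases hx.2.lt_or_eq with hxb | rfl
    · exact ⟨f x, hf x ⟨hx.1, hxb⟩⟩
    · exact ⟨L, by rwa [nhdsWithin_Ico_eq_nhdsLT hab]⟩
  have hψ_eq : EqOn (extendFrom (Ico a b) f) f (Ico a b) := fun x hx =>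
    extendFrom_eq (subset_closure hx) (hf x hx)
  have hlim : ∀ ψ : ℝ → E, ContinuousOn ψ (Icc a b) → EqOn ψ f (Ico a b) →
      Tendsto f (𝓝[<] b) (𝓝 (ψ b)) := by
    intro ψ hψ hψf
    rw [← nhdsWithin_Ico_eq_nhdsLT hab]
    exact ((hψ b (right_mem_Icc.2 hab.le)).mono Ico_subset_Icc_self).congr'
      (eventually_nhdsWithin_of_forall hψf)
  exact ⟨_, hψ_cont, hψ_eq, fun ψ' hψ' hψ'f =>
    tendsto_nhds_unique (hlim ψ' hψ' hψ'f) (hlim _ hψ_cont hψ_eq)⟩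

theorem stmt_14_general (T p α τ : ℝ) (hp : 1 < p) (hαp : 1 / p < α) (hα1 : α < 1)
    (hτ0 : 0 < τ) (hτT : τ ≤ T)
    (m : ℕ) (u₀ : EuclideanSpace ℝ (Fin m))
    (G : ℝ → EuclideanSpace ℝ (Fin m) → EuclideanSpace ℝ (Fin m))
    (hGmeas : ∀ x, Measurable (fun t => G t x))
    (hGcont : ∀ᵐ t ∂(volume.restrict (Set.Icc 0 T)), Continuous (fun x => G t x))
    (γ : ℝ → ℝ)
    (hγ : MeasureTheory.MemLp γ (ENNReal.ofReal p) (volume.restrict (Set.Icc 0 T)))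
    (C q : ℝ) (hq : 1 ≤ q)
    (hgrowth : ∀ x, ∀ᵐ t ∂(volume.restrict (Set.Icc 0 T)),
      ‖G t x‖ ≤ γ t + C * ‖x‖ ^ (q / p))
    (φ : ℝ → EuclideanSpace ℝ (Fin m))
    (hφcont : ContinuousOn φ (Set.Ico 0 τ))
    (hφLq : IntegrableOn (fun t => ‖φ t‖ ^ q) (Set.Ioo 0 τ))
    (hφeq : ∀ t ∈ Set.Ico (0:ℝ) τ,
      φ t = u₀ + (Real.Gamma α)⁻¹ • ∫ s in (0:ℝ)..t, ((t - s) ^ (α - 1)) • G s (φ s)) :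
    (∀ t₁ t₂ : ℝ, 0 < t₁ → t₁ < t₂ → t₂ < τ →
        ‖φ t₁ - φ t₂‖
          ≤ (2 / Real.Gamma α) * ((p - 1) / (α * p - 1)) ^ (1 - 1 / p) *
            (t₂ - t₁) ^ (α - 1 / p) *
            (∫ s in (0:ℝ)..τ, ‖G s (φ s)‖ ^ p) ^ (1 / p)) ∧
      ∃ ψ : ℝ → EuclideanSpace ℝ (Fin m),
        ContinuousOn ψ (Set.Icc 0 τ) ∧ Set.EqOn ψ φ (Set.Ico 0 τ) ∧
        ∀ ψ' : ℝ → EuclideanSpace ℝ (Fin m),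
          ContinuousOn ψ' (Set.Icc 0 τ) → Set.EqOn ψ' φ (Set.Ico 0 τ) → ψ' τ = ψ τ := by
  have hIoo : Ioo 0 τ ⊆ Icc 0 T := fun t ht => ⟨ht.1.le, ht.2.le.trans hτT⟩
  have hg : MemLp (fun s => G s (φ s)) (ENNReal.ofReal p) (volume.restrict (Ioo 0 τ)) :=
    memLp_comp_of_caratheodory_growth (one_pos.trans hp) (by linarith)
      (fun x => (hGmeas x).stronglyMeasurable) (ae_restrict_of_ae_restrict_of_subset hIoo hGcont)
      (hγ.mono_measure (Measure.restrict_mono hIoo le_rfl))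
      (fun x => ae_restrict_of_ae_restrict_of_subset hIoo (hgrowth x))
      ((hφcont.mono Ioo_subset_Ico_self).aemeasurable measurableSet_Ioo) hφLq
  have hestimate := fun t₁ t₂ (h₁ : 0 < t₁) (h₁₂ : t₁ < t₂) (h₂ : t₂ < τ) =>
    norm_sub_le_of_eq_add_integral_rpow_smul hp hαp hα1.le hg hφeq h₁.le h₁₂.le h₂
  obtain ⟨L, hL⟩ := exists_tendsto_nhdsWithin_of_uniformContinuousOn
    (uniformContinuousOn_of_dist_le_rpow (s := Ioo 0 τ) (f := φ) (sub_pos.2 hαp)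
      fun x hx y hy hxy => by
        rw [dist_eq_norm]
        exact (hestimate x y hx.1 hxy hy.2).trans_eq (mul_right_comm _ _ _))
    (closure_Ioo hτ0.ne ▸ right_mem_Icc.2 hτ0.le)
  rw [nhdsWithin_Ioo_eq_nhdsLT hτ0] at hL
  exact ⟨hestimate, exists_continuousOn_Icc_extension hτ0 hφcont hL⟩

theorem stmt_14 (T p α τ : ℝ) (hT : 0 < T) (hp : 1 < p) (hαp : 1 / p < α) (hα1 : α < 1)
    (hτ0 : 0 < τ) (hτT : τ ≤ T)
    (m : ℕ) (u₀ : EuclideanSpace ℝ (Fin m))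
    (G : ℝ → EuclideanSpace ℝ (Fin m) → EuclideanSpace ℝ (Fin m))
    (hGmeas : ∀ x, Measurable (fun t => G t x))
    (hGcont : ∀ᵐ t ∂(volume.restrict (Set.Icc 0 T)), Continuous (fun x => G t x))
    (γ : ℝ → ℝ)
    (hγ : MeasureTheory.MemLp γ (ENNReal.ofReal p) (volume.restrict (Set.Icc 0 T)))
    (C q : ℝ) (hC : 0 ≤ C) (hq : 1 ≤ q)
    (hgrowth : ∀ x, ∀ᵐ t ∂(volume.restrict (Set.Icc 0 T)),
      ‖G t x‖ ≤ γ t + C * ‖x‖ ^ (q / p))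
    (φ : ℝ → EuclideanSpace ℝ (Fin m))
    (hφcont : ContinuousOn φ (Set.Ico 0 τ))
    (hφLq : IntegrableOn (fun t => ‖φ t‖ ^ q) (Set.Ioo 0 τ))
    (hφeq : ∀ t ∈ Set.Ico (0:ℝ) τ,
      φ t = u₀ + (Real.Gamma α)⁻¹ • ∫ s in (0:ℝ)..t, ((t - s) ^ (α - 1)) • G s (φ s)) :
    (∀ t₁ t₂ : ℝ, 0 < t₁ → t₁ < t₂ → t₂ < τ →
        ‖φ t₁ - φ t₂‖
          ≤ (2 / Real.Gamma α) * ((p - 1) / (α * p - 1)) ^ (1 - 1 / p) *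
            (t₂ - t₁) ^ (α - 1 / p) *
            (∫ s in (0:ℝ)..τ, ‖G s (φ s)‖ ^ p) ^ (1 / p)) ∧
      ∃ ψ : ℝ → EuclideanSpace ℝ (Fin m),
        ContinuousOn ψ (Set.Icc 0 τ) ∧ Set.EqOn ψ φ (Set.Ico 0 τ) ∧
        ∀ ψ' : ℝ → EuclideanSpace ℝ (Fin m),
          ContinuousOn ψ' (Set.Icc 0 τ) → Set.EqOn ψ' φ (Set.Ico 0 τ) → ψ' τ = ψ τ :=
  stmt_14_general T p α τ hp hαp hα1 hτ0 hτT m u₀ G hGmeas hGcont γ hγ C q hq hgrowth φ hφcont hφLq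
    hφeq
end
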